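/- Let ψ(x) := max(1/2 − |x − 1/2|, 0) and, for integers l ≥ 0 and 0 ≤ k ≤ 2^l − 1, let ψ_{l,k}(x) := 2^{−l/2} ψ(2^l x − k). Then for all x₁, x₂ ∈ [0,1], the series ∑_{l≥0} ∑_{k=0}^{2^l−1} ψ_{l,k}(x₁) ψ_{l,k}(x₂) converges and its sum equals min(x₁, x₂) − x₁ x₂. -/
import Mathlib


/-- The mother hat function `ψ(x) = max(1/2 − |x − 1/2|, 0)`. -/
noncomputable def motherHat (x : ℝ) : ℝ := max (1 / 2 - |x - 1 / 2|) 0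

/-- The Schauder (Faber–Schauder) basis functions
`ψ_{l,k}(x) = 2^{−l/2} ψ(2^l x − k)` on `[0,1]`. -/
noncomputable def schauder (l k : ℕ) (x : ℝ) : ℝ :=
  (2 : ℝ) ^ (-(l : ℝ) / 2) * motherHat ((2 : ℝ) ^ l * x - (k : ℝ))

lemma motherHat_nonneg (x : ℝ) : 0 ≤ motherHat x := le_max_right _ _

lemma motherHat_eq_zero {x : ℝ} (h : x ≤ 0 ∨ 1 ≤ x) : motherHat x = 0 := by
  have h1 := le_abs_self (x - 1/2)
  have h2 := neg_abs_le (x - 1/2)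
  rcases h with h | h <;>
  · unfold motherHat
    rw [max_eq_right (by linarith)]

lemma mem_of_motherHat_ne_zero {x : ℝ} (h : motherHat x ≠ 0) : 0 < x ∧ x < 1 := by
  rcases le_or_gt x 0 with h0 | h0
  · exact absurd (motherHat_eq_zero (Or.inl h0)) h
  rcases le_or_gt 1 x with h1 | h1
  · exact absurd (motherHat_eq_zero (Or.inr h1)) h
  exact ⟨h0, h1⟩

lemma motherHat_of_mem {x : ℝ} (h0 : 0 ≤ x) (h1 : x ≤ 1) :
    motherHat x = min x (1 - x) := by
  unfold motherHat
  rcases le_total x (1/2) with h | h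
  · rw [abs_of_nonpos (by linarith), max_eq_left (by linarith),
      min_eq_left (by linarith)]
    ring
  · rw [abs_of_nonneg (by linarith), max_eq_left (by linarith),
      min_eq_right (by linarith)]
    ring

lemma floor_eq_of_hat {c : ℝ} {k : ℕ} (h : motherHat (c - k) ≠ 0) : ⌊c⌋ = k := by
  obtain ⟨h1, h2⟩ := mem_of_motherHat_ne_zero h
  rw [Int.floor_eq_iff]
  push_cast
  constructor <;> linarith

lemma key {s t : ℝ} (hs0 : 0 ≤ s) (hs1 : s < 1) (ht0 : 0 ≤ t) (ht1 : t < 1) :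
    min s t - s * t = motherHat s * motherHat t +
      (if ⌊2 * s⌋ = ⌊2 * t⌋ then
        (1 / 2) * (min (Int.fract (2 * s)) (Int.fract (2 * t)) -
          Int.fract (2 * s) * Int.fract (2 * t))
      else 0) := by
  have hfl : ∀ u : ℝ, 0 ≤ u → u < 1/2 → ⌊2 * u⌋ = 0 ∧ Int.fract (2 * u) = 2 * u := by
    intro u h0 h1
    constructor
    · rw [Int.floor_eq_zero_iff]
      exact Set.mem_Ico.mpr ⟨by linarith, by linarith⟩
    · rw [Int.fract_eq_self]
      exact ⟨by linarith, by linarith⟩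
  have hfu : ∀ u : ℝ, 1/2 ≤ u → u < 1 → ⌊2 * u⌋ = 1 ∧ Int.fract (2 * u) = 2 * u - 1 := by
    intro u h0 h1
    have hf : ⌊2 * u⌋ = 1 := by
      rw [Int.floor_eq_iff]
      push_cast
      constructor <;> linarith
    exact ⟨hf, by rw [Int.fract, hf]; norm_num⟩
  have hmhs : motherHat s = min s (1 - s) := motherHat_of_mem hs0 hs1.le
  have hmht : motherHat t = min t (1 - t) := motherHat_of_mem ht0 ht1.le
  rcases lt_or_ge s (1/2) with hs | hs <;> rcases lt_or_ge t (1/2) with ht | ht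
  · obtain ⟨e1, e2⟩ := hfl s hs0 hs
    obtain ⟨f1, f2⟩ := hfl t ht0 ht
    rw [if_pos (by rw [e1, f1]), e2, f2]
    have h1 : motherHat s = s := by rw [hmhs]; exact min_eq_left (by linarith)
    have h2 : motherHat t = t := by rw [hmht]; exact min_eq_left (by linarith)
    rw [h1, h2]
    rcases le_total s t with h | h
    · rw [min_eq_left h, min_eq_left (by linarith : 2*s ≤ 2*t)]; ring
    · rw [min_eq_right h, min_eq_right (by linarith : 2*t ≤ 2*s)]; ring
  · obtain ⟨e1, _⟩ := hfl s hs0 hs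
    obtain ⟨f1, _⟩ := hfu t ht ht1
    have h1 : motherHat s = s := by rw [hmhs]; exact min_eq_left (by linarith)
    have h2 : motherHat t = 1 - t := by rw [hmht]; exact min_eq_right (by linarith)
    rw [if_neg (by rw [e1, f1]; norm_num), h1, h2, min_eq_left (by linarith : s ≤ t)]
    ring
  · obtain ⟨e1, _⟩ := hfu s hs hs1
    obtain ⟨f1, _⟩ := hfl t ht0 ht
    have h1 : motherHat s = 1 - s := by rw [hmhs]; exact min_eq_right (by linarith)
    have h2 : motherHat t = t := by rw [hmht]; exact min_eq_left (by linarith)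
    rw [if_neg (by rw [e1, f1]; norm_num), h1, h2, min_eq_right (by linarith : t ≤ s)]
    ring
  · obtain ⟨e1, e2⟩ := hfu s hs hs1
    obtain ⟨f1, f2⟩ := hfu t ht ht1
    rw [if_pos (by rw [e1, f1]), e2, f2]
    have h1 : motherHat s = 1 - s := by rw [hmhs]; exact min_eq_right (by linarith)
    have h2 : motherHat t = 1 - t := by rw [hmht]; exact min_eq_right (by linarith)
    rw [h1, h2]
    rcases le_total s t with h | h
    · rw [min_eq_left h, min_eq_left (by linarith : 2*s - 1 ≤ 2*t - 1)]; ring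
    · rw [min_eq_right h, min_eq_right (by linarith : 2*t - 1 ≤ 2*s - 1)]; ring


lemma sum_hat (M : ℕ) {c d : ℝ} (hc0 : 0 ≤ c) (hcM : c ≤ (M : ℝ))
    (hd0 : 0 ≤ d) (hdM : d ≤ (M : ℝ)) :
    ∑ k ∈ Finset.range M, motherHat (c - k) * motherHat (d - k) =
      if ⌊c⌋ = ⌊d⌋ then motherHat (Int.fract c) * motherHat (Int.fract d) else 0 := by
  by_cases hfl : ⌊c⌋ = ⌊d⌋
  · rw [if_pos hfl]
    by_cases htop : ⌊c⌋ = (M : ℤ)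
    · have hcM' : (M : ℝ) ≤ c := by
        have := Int.floor_le c
        rw [htop] at this
        exact_mod_cast this
      have hce : c = (M : ℝ) := le_antisymm hcM hcM'
      have hfr : Int.fract c = 0 := by
        rw [hce, show ((M:ℕ):ℝ) = ((M:ℤ):ℝ) by push_cast; ring, Int.fract_intCast]
      rw [hfr, motherHat_eq_zero (Or.inl le_rfl), zero_mul]
      apply Finset.sum_eq_zero
      intro k hk
      have hk' : k < M := Finset.mem_range.mp hk
      have hk1 : (1:ℝ) ≤ c - k := by
        rw [hce]
        have : (k:ℝ) + 1 ≤ (M:ℝ) := by exact_mod_cast Nat.succ_le_of_lt hk'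
        linarith
      rw [motherHat_eq_zero (Or.inr hk1), zero_mul]
    · have hj0 : 0 ≤ ⌊c⌋ := Int.floor_nonneg.mpr hc0
      have hjM : ⌊c⌋ < (M : ℤ) := by
        have : ⌊c⌋ ≤ (M : ℤ) := by
          have := Int.floor_le_floor hcM
          simpa using this
        omega
      rw [Finset.sum_eq_single ⌊c⌋.toNat]
      · have h1 : ((⌊c⌋.toNat : ℕ) : ℝ) = ((⌊c⌋ : ℤ) : ℝ) := by
          exact_mod_cast congrArg (fun z : ℤ => (z : ℝ)) (Int.toNat_of_nonneg hj0)
        rw [Int.fract, Int.fract, h1, hfl]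
      · intro k _ hk
        by_contra hne
        obtain ⟨hne1, _⟩ := mul_ne_zero_iff.mp hne
        have := floor_eq_of_hat hne1
        apply hk
        omega
      · intro hmem
        exfalso
        apply hmem
        rw [Finset.mem_range]
        omega
  · rw [if_neg hfl]
    apply Finset.sum_eq_zero
    intro k _
    by_contra hne
    obtain ⟨hne1, hne2⟩ := mul_ne_zero_iff.mp hne
    have h1 := floor_eq_of_hat hne1
    have h2 := floor_eq_of_hat hne2
    exact hfl (h1.trans h2.symm)

lemma floor_two_mul' (c : ℝ) : ⌊2 * c⌋ = 2 * ⌊c⌋ + ⌊2 * Int.fract c⌋ := by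
  conv_lhs => rw [show (2:ℝ) * c = ((2 * ⌊c⌋ : ℤ) : ℝ) + 2 * Int.fract c by
    push_cast [Int.fract]; ring]
  rw [Int.floor_intCast_add]

lemma fract_two_mul' (c : ℝ) : Int.fract (2 * c) = Int.fract (2 * Int.fract c) := by
  conv_lhs => rw [show (2:ℝ) * c = ((2 * ⌊c⌋ : ℤ) : ℝ) + 2 * Int.fract c by
    push_cast [Int.fract]; ring]
  rw [Int.fract_intCast_add]

lemma fract_floor_bounds (c : ℝ) : ⌊2 * Int.fract c⌋ = 0 ∨ ⌊2 * Int.fract c⌋ = 1 := by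
  have h0 : (0:ℤ) ≤ ⌊2 * Int.fract c⌋ := Int.floor_nonneg.mpr (by linarith [Int.fract_nonneg c])
  have h1 : ⌊2 * Int.fract c⌋ < 2 := by
    rw [Int.floor_lt]
    push_cast
    linarith [Int.fract_lt_one c]
  omega

noncomputable def Ebb (N : ℕ) (x y : ℝ) : ℝ :=
  if ⌊(2:ℝ)^N * x⌋ = ⌊(2:ℝ)^N * y⌋ then
    ((2:ℝ)^N)⁻¹ * (min (Int.fract ((2:ℝ)^N * x)) (Int.fract ((2:ℝ)^N * y)) -
      Int.fract ((2:ℝ)^N * x) * Int.fract ((2:ℝ)^N * y))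
  else 0

lemma schauder_mul (l k : ℕ) (x y : ℝ) :
    schauder l k x * schauder l k y =
      ((2:ℝ)^l)⁻¹ * (motherHat ((2:ℝ)^l * x - k) * motherHat ((2:ℝ)^l * y - k)) := by
  unfold schauder
  have h : (2:ℝ) ^ (-(l : ℝ) / 2) * (2:ℝ) ^ (-(l : ℝ) / 2) = ((2:ℝ)^l)⁻¹ := by
    rw [← Real.rpow_add two_pos, show -(l : ℝ) / 2 + -(l : ℝ) / 2 = -(l : ℝ) by ring,
      Real.rpow_neg (by norm_num), Real.rpow_natCast]
  rw [mul_mul_mul_comm, h]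

lemma step (N : ℕ) {x y : ℝ} (hx : x ∈ Set.Icc (0:ℝ) 1) (hy : y ∈ Set.Icc (0:ℝ) 1) :
    Ebb N x y = (∑ k ∈ Finset.range (2^N), schauder N k x * schauder N k y)
      + Ebb (N+1) x y := by
  obtain ⟨hx0, hx1⟩ := hx
  obtain ⟨hy0, hy1⟩ := hy
  have h2N : (0:ℝ) < (2:ℝ)^N := by positivity
  set c := (2:ℝ)^N * x with hcdef
  set d := (2:ℝ)^N * y with hddef
  have hc0 : 0 ≤ c := by positivity
  have hd0 : 0 ≤ d := by positivity
  have hcM : c ≤ ((2^N : ℕ) : ℝ) := by push_cast; nlinarith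
  have hdM : d ≤ ((2^N : ℕ) : ℝ) := by push_cast; nlinarith
  have h2c : (2:ℝ)^(N+1) * x = 2 * c := by rw [pow_succ, hcdef]; ring
  have h2d : (2:ℝ)^(N+1) * y = 2 * d := by rw [pow_succ, hddef]; ring
  have hsum : ∑ k ∈ Finset.range (2^N), schauder N k x * schauder N k y
      = ((2:ℝ)^N)⁻¹ *
        (if ⌊c⌋ = ⌊d⌋ then motherHat (Int.fract c) * motherHat (Int.fract d) else 0) := by
    rw [show ∑ k ∈ Finset.range (2^N), schauder N k x * schauder N k y
        = ∑ k ∈ Finset.range (2^N),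
            ((2:ℝ)^N)⁻¹ * (motherHat (c - k) * motherHat (d - k)) from
      Finset.sum_congr rfl fun k _ => schauder_mul N k x y,
      ← Finset.mul_sum, sum_hat (2^N) hc0 hcM hd0 hdM]
  rw [hsum]
  unfold Ebb
  rw [h2c, h2d]
  by_cases hfl : ⌊c⌋ = ⌊d⌋
  · set s := Int.fract c with hsdef
    set t := Int.fract d with htdef
    have hcond : (⌊2 * c⌋ = ⌊2 * d⌋) ↔ (⌊2 * s⌋ = ⌊2 * t⌋) := by
      rw [floor_two_mul' c, floor_two_mul' d, ← hsdef, ← htdef]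
      constructor <;> intro <;> omega
    have hfc : Int.fract (2 * c) = Int.fract (2 * s) := fract_two_mul' c
    have hfd : Int.fract (2 * d) = Int.fract (2 * t) := fract_two_mul' d
    have hpow : ((2:ℝ)^(N+1))⁻¹ = ((2:ℝ)^N)⁻¹ * (1/2) := by
      rw [pow_succ, mul_inv]
      norm_num
    have hkey := key (Int.fract_nonneg c) (Int.fract_lt_one c)
      (Int.fract_nonneg d) (Int.fract_lt_one d)
    rw [← hsdef, ← htdef] at hkey
    rw [if_pos hfl, if_pos hfl] at *
    by_cases h2 : ⌊2 * s⌋ = ⌊2 * t⌋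
    · rw [if_pos (hcond.mpr h2), if_pos h2] at *
      rw [hfc, hfd, hpow]
      linear_combination ((2:ℝ)^N)⁻¹ * hkey
    · rw [if_neg (fun hh => h2 (hcond.mp hh))]
      rw [if_neg h2] at hkey
      linear_combination ((2:ℝ)^N)⁻¹ * hkey
  · have h2ne : ¬ (⌊2 * c⌋ = ⌊2 * d⌋) := by
      intro hh
      apply hfl
      rw [floor_two_mul' c, floor_two_mul' d] at hh
      rcases fract_floor_bounds c with e | e <;> rcases fract_floor_bounds d with f | f <;>
        omega
    rw [if_neg hfl, if_neg hfl, if_neg h2ne]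
    simp

lemma Ebb_zero {x y : ℝ} (hx : x ∈ Set.Icc (0:ℝ) 1) (hy : y ∈ Set.Icc (0:ℝ) 1) :
    Ebb 0 x y = min x y - x * y := by
  obtain ⟨hx0, hx1⟩ := hx
  obtain ⟨hy0, hy1⟩ := hy
  unfold Ebb
  simp only [pow_zero, one_mul, inv_one]
  rcases eq_or_lt_of_le hx1 with hx1 | hx1 <;> rcases eq_or_lt_of_le hy1 with hy1 | hy1
  · rw [hx1, hy1]
    norm_num [Int.fract_one]
  · rw [hx1, if_neg (by
      rw [Int.floor_one, Int.floor_eq_zero_iff.mpr (Set.mem_Ico.mpr ⟨hy0, hy1⟩)]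
      norm_num), min_eq_right hy1.le]
    ring
  · rw [hy1, if_neg (by
      rw [Int.floor_one, Int.floor_eq_zero_iff.mpr (Set.mem_Ico.mpr ⟨hx0, hx1⟩)]
      norm_num), min_eq_left hx1.le]
    ring
  · rw [if_pos (by
      rw [Int.floor_eq_zero_iff.mpr (Set.mem_Ico.mpr ⟨hx0, hx1⟩),
        Int.floor_eq_zero_iff.mpr (Set.mem_Ico.mpr ⟨hy0, hy1⟩)]),
      Int.fract_eq_self.mpr ⟨hx0, hx1⟩, Int.fract_eq_self.mpr ⟨hy0, hy1⟩]

lemma Ebb_nonneg (N : ℕ) (x y : ℝ) : 0 ≤ Ebb N x y := by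
  unfold Ebb
  split
  · set s := Int.fract ((2:ℝ)^N * x)
    set t := Int.fract ((2:ℝ)^N * y)
    have hs0 : 0 ≤ s := Int.fract_nonneg _
    have ht0 : 0 ≤ t := Int.fract_nonneg _
    have hs1 : s < 1 := Int.fract_lt_one _
    have ht1 : t < 1 := Int.fract_lt_one _
    have : s * t ≤ min s t := le_min (by nlinarith) (by nlinarith)
    have h2 : (0:ℝ) ≤ ((2:ℝ)^N)⁻¹ := by positivity
    nlinarith
  · exact le_refl 0

lemma Ebb_le (N : ℕ) (x y : ℝ) : Ebb N x y ≤ ((1:ℝ)/2)^N := by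
  have hp : ((1:ℝ)/2)^N = ((2:ℝ)^N)⁻¹ := by
    rw [div_pow, one_pow, one_div]
  rw [hp]
  unfold Ebb
  split
  · set s := Int.fract ((2:ℝ)^N * x)
    set t := Int.fract ((2:ℝ)^N * y)
    have hs0 : 0 ≤ s := Int.fract_nonneg _
    have ht0 : 0 ≤ t := Int.fract_nonneg _
    have hs1 : s < 1 := Int.fract_lt_one _
    have h2 : (0:ℝ) < ((2:ℝ)^N)⁻¹ := by positivity
    have hmin : min s t - s * t ≤ 1 := by
      have : min s t ≤ s := min_le_left _ _
      nlinarith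
    nlinarith
  · positivity

/-- For `x₁, x₂ ∈ [0,1]`, the series `∑_{l≥0} ∑_{k=0}^{2^l−1} ψ_{l,k}(x₁) ψ_{l,k}(x₂)`
converges and its sum equals `min(x₁,x₂) − x₁ x₂`, the covariance of the Brownian
bridge. -/
theorem stmt13 (x₁ x₂ : ℝ) (h₁ : x₁ ∈ Set.Icc (0 : ℝ) 1) (h₂ : x₂ ∈ Set.Icc (0 : ℝ) 1) :
    HasSum (fun l : ℕ => ∑ k ∈ Finset.range (2 ^ l), schauder l k x₁ * schauder l k x₂)
      (min x₁ x₂ - x₁ * x₂) := by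
  have hnn : ∀ l : ℕ, 0 ≤ ∑ k ∈ Finset.range (2 ^ l), schauder l k x₁ * schauder l k x₂ := by
    intro l
    apply Finset.sum_nonneg
    intro k _
    unfold schauder
    have := motherHat_nonneg ((2:ℝ)^l * x₁ - k)
    have := motherHat_nonneg ((2:ℝ)^l * x₂ - k)
    have h2 : (0:ℝ) ≤ (2:ℝ) ^ (-(l:ℝ)/2) := le_of_lt (Real.rpow_pos_of_pos two_pos _)
    positivity
  have hpart : ∀ N : ℕ, ∑ l ∈ Finset.range N,
      (∑ k ∈ Finset.range (2 ^ l), schauder l k x₁ * schauder l k x₂)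
      = (min x₁ x₂ - x₁ * x₂) - Ebb N x₁ x₂ := by
    intro N
    induction N with
    | zero => simp [Ebb_zero h₁ h₂]
    | succ n ih =>
      rw [Finset.sum_range_succ, ih, step n h₁ h₂]
      ring
  have hE : Filter.Tendsto (fun N => Ebb N x₁ x₂) Filter.atTop (nhds 0) := by
    apply squeeze_zero (fun n => Ebb_nonneg n x₁ x₂) (fun n => Ebb_le n x₁ x₂)
    exact tendsto_pow_atTop_nhds_zero_of_lt_one (by norm_num) (by norm_num)
  have hT : Filter.Tendsto (fun N : ℕ => ∑ l ∈ Finset.range N,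
      (∑ k ∈ Finset.range (2 ^ l), schauder l k x₁ * schauder l k x₂))
      Filter.atTop (nhds (min x₁ x₂ - x₁ * x₂)) := by
    have := (tendsto_const_nhds (x := min x₁ x₂ - x₁ * x₂) (f := Filter.atTop (α := ℕ))).sub hE
    rw [sub_zero] at this
    exact this.congr fun N => (hpart N).symm
  exact (hasSum_iff_tendsto_nat_of_nonneg hnn _).mpr hT
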